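/- Let (X,T) be a TDS, μ a T-invariant ergodic Borel probability measure on X, and M ⊆ X a Borel set such that ρ_FK(x,y) = 0 for every x,y ∈ M. Then for every τ > 0 there exist N ∈ ℕ and a Borel set M₀ ⊆ M with μ(M \ M₀) < τ such that for every x,y ∈ M₀ and every n ≥ N one has f̄_{n,τ}(x,y) ≤ τ. -/

import Mathlib

open Filter Topology MeasureTheory Set

namespace FKPaper

variable {X : Type*} [MetricSpace X]

/-- The maximal fit of an `(n,δ)`-match between the orbits of `x` and `z` under `T`:
the largest cardinality of the domain of an order-preserving bijection
`π : D → R`, with `D, R ⊆ {0,…,n-1}` and `dist (T^[i] x) (T^[π i] z) < δ` for `i ∈ D`. -/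
noncomputable def maxFit (T : X → X) (δ : ℝ) (n : ℕ) (x z : X) : ℕ :=
  sSup {k : ℕ | ∃ i j : Fin k → ℕ, StrictMono i ∧ StrictMono j ∧
    (∀ s, i s < n) ∧ (∀ s, j s < n) ∧ ∀ s, dist (T^[i s] x) (T^[j s] z) < δ}

/-- `f̄_{n,δ}(x,z) = 1 - (maximal fit of an (n,δ)-match of x and z)/n`. -/
noncomputable def fbarN (T : X → X) (δ : ℝ) (n : ℕ) (x z : X) : ℝ :=
  1 - (maxFit T δ n x z : ℝ) / n

/-- `f̄_δ(x,z) = limsup_{n→∞} f̄_{n,δ}(x,z)`. -/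
noncomputable def fbar (T : X → X) (δ : ℝ) (x z : X) : ℝ :=
  Filter.limsup (fun n => fbarN T δ n x z) Filter.atTop

/-- The Feldman–Katok pseudometric `ρ_FK(x,z) = inf {δ > 0 : f̄_δ(x,z) < δ}`. -/
noncomputable def rhoFK (T : X → X) (x z : X) : ℝ :=
  sInf {δ : ℝ | 0 < δ ∧ fbar T δ x z < δ}

end FKPaper

open FKPaper Filter Topology MeasureTheory Set

/-!
Fix `p ∈ M`. Since `ρ_FK(x, p) = 0`, each `x ∈ M` satisfies `f̄_{n,τ/2}(x, p) ≤ τ/2` for all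
large `n`; the sets of points for which this holds from time `N` on increase to `M`, so one of
them carries all but `τ` of the measure of `M`. Composing matches through `p` gives the triangle
inequality `f̄_{n,τ}(x, y) ≤ f̄_{n,τ/2}(x, p) + f̄_{n,τ/2}(p, y)`, uniformly in `n`.
-/

theorem StrictMono.exists_strictMono_comp_eq {α β γ : Type*} [LinearOrder α]
    [Preorder β] [LinearOrder γ] {f : α → γ} {g : β → γ} (hf : StrictMono f)
    (hg : StrictMono g) (hgf : ∀ b, g b ∈ range f) :
    ∃ σ : β → α, StrictMono σ ∧ ∀ b, f (σ b) = g b := by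
  choose σ hσ using hgf
  refine ⟨σ, fun b b' hbb' => ?_, hσ⟩
  rw [← hf.lt_iff_lt, hσ, hσ]
  exact hg hbb'

theorem MeasureTheory.exists_measure_diff_lt_of_subset_iUnion {α : Type*} [MeasurableSpace α]
    (μ : Measure α) [IsFiniteMeasure μ] {s : Set α} {A : ℕ → Set α} (hs : MeasurableSet s)
    (hA : ∀ N, MeasurableSet (A N)) (hmono : Monotone A) (hsA : s ⊆ ⋃ N, A N)
    {ε : ENNReal} (hε : 0 < ε) : ∃ N, μ (s \ A N) < ε := by
  have hempty : ⋂ N, s \ A N = ∅ := by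
    rw [← sdiff_iUnion]
    exact sdiff_eq_empty.2 hsA
  have htend := tendsto_measure_iInter_atTop (μ := μ)
    (fun N => (hs.diff (hA N)).nullMeasurableSet)
    (fun _ _ hNN' => sdiff_subset_sdiff_right (hmono hNN')) ⟨0, measure_ne_top μ _⟩
  rw [hempty, measure_empty] at htend
  exact (htend.eventually_lt_const hε).exists

namespace FKPaper

def matchSizes (r : ℕ → ℕ → Prop) (n : ℕ) : Set ℕ :=
  {k | ∃ i j : Fin k → ℕ, StrictMono i ∧ StrictMono j ∧
    (∀ s, i s < n) ∧ (∀ s, j s < n) ∧ ∀ s, r (i s) (j s)}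

section matchSizes

variable {r r' : ℕ → ℕ → Prop} {n k : ℕ}

theorem zero_mem_matchSizes : 0 ∈ matchSizes r n :=
  ⟨Fin.elim0, Fin.elim0, fun s => s.elim0, fun s => s.elim0, fun s => s.elim0,
    fun s => s.elim0, fun s => s.elim0⟩

theorem le_of_mem_matchSizes (hk : k ∈ matchSizes r n) : k ≤ n := by
  obtain ⟨i, -, hi, -, hin, -, -⟩ := hk
  simpa using Finset.card_le_card_of_injOn (s := Finset.univ) (t := Finset.range n) i
    (fun s _ => Finset.mem_range.2 (hin s)) hi.injective.injOn

theorem mem_matchSizes_of_le {k' : ℕ} (hk : k ∈ matchSizes r n) (hk' : k' ≤ k) :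
    k' ∈ matchSizes r n := by
  obtain ⟨i, j, hi, hj, hin, hjn, hr⟩ := hk
  have hc := Fin.strictMono_castLE hk'
  exact ⟨i ∘ Fin.castLE hk', j ∘ Fin.castLE hk', hi.comp hc, hj.comp hc,
    fun s => hin _, fun s => hjn _, fun s => hr _⟩

theorem matchSizes_mono (h : ∀ a b, r a b → r' a b) : matchSizes r n ⊆ matchSizes r' n :=
  fun _ ⟨i, j, hi, hj, hin, hjn, hr⟩ => ⟨i, j, hi, hj, hin, hjn, fun s => h _ _ (hr s)⟩

theorem matchSizes_flip : matchSizes (flip r) n = matchSizes r n := by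
  ext k
  constructor <;> exact fun ⟨i, j, hi, hj, hin, hjn, hr⟩ => ⟨j, i, hj, hi, hjn, hin, hr⟩

theorem bddAbove_matchSizes : BddAbove (matchSizes r n) :=
  ⟨n, fun _ => le_of_mem_matchSizes⟩

theorem sSup_matchSizes_mem : sSup (matchSizes r n) ∈ matchSizes r n :=
  Nat.sSup_mem ⟨0, zero_mem_matchSizes⟩ bddAbove_matchSizes

theorem le_sSup_matchSizes_iff : k ≤ sSup (matchSizes r n) ↔ k ∈ matchSizes r n :=
  ⟨fun hk => mem_matchSizes_of_le sSup_matchSizes_mem hk,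
    fun hk => le_csSup bddAbove_matchSizes hk⟩

end matchSizes

/-- The times where the range of the first match meets the domain of the second carry a
composed match; there are at least `k₁ + k₂ - n` of them since both sets lie in `{0,…,n-1}`. -/
theorem exists_mem_matchSizes_comp {r r' : ℕ → ℕ → Prop} {n k₁ k₂ : ℕ}
    (h₁ : k₁ ∈ matchSizes r n) (h₂ : k₂ ∈ matchSizes r' n) :
    ∃ m ∈ matchSizes (Relation.Comp r r') n, k₁ + k₂ ≤ n + m := by
  classical
  obtain ⟨i, j, hi, hj, hin, hjn, hr⟩ := h₁
  obtain ⟨i', j', hi', hj', hin', hjn', hr'⟩ := h₂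
  let A := Finset.univ.image j
  let B := Finset.univ.image i'
  refine ⟨(A ∩ B).card, ?_, ?_⟩
  · set e := (A ∩ B).orderIsoOfFin rfl
    have he : StrictMono fun t => (e t : ℕ) := fun _ _ h => e.strictMono h
    have hAB : ∀ t, (e t : ℕ) ∈ A ∩ B := fun t => (e t).2
    obtain ⟨σ, hσ, hjσ⟩ := hj.exists_strictMono_comp_eq he fun t => by
      simpa [A] using (Finset.mem_inter.1 (hAB t)).1
    obtain ⟨ρ, hρ, hi'ρ⟩ := hi'.exists_strictMono_comp_eq he fun t => by
      simpa [B] using (Finset.mem_inter.1 (hAB t)).2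
    refine ⟨i ∘ σ, j' ∘ ρ, hi.comp hσ, hj'.comp hρ, fun t => hin _, fun t => hjn' _,
      fun t => ⟨e t, ?_, ?_⟩⟩
    · simpa [hjσ] using hr (σ t)
    · simpa [hi'ρ] using hr' (ρ t)
  · have hA : A.card = k₁ := by simp [A, Finset.card_image_of_injective _ hj.injective]
    have hB : B.card = k₂ := by simp [B, Finset.card_image_of_injective _ hi'.injective]
    have hunion : (A ∪ B).card ≤ n := by
      simpa using Finset.card_le_card (t := Finset.range n) <| Finset.union_subset
        (Finset.image_subset_iff.2 fun s _ => Finset.mem_range.2 (hjn s))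
        (Finset.image_subset_iff.2 fun s _ => Finset.mem_range.2 (hin' s))
    have := Finset.card_union_add_card_inter A B
    omega

variable {X : Type*} [MetricSpace X] (T : X → X)

def orbitRel (δ : ℝ) (x z : X) (a b : ℕ) : Prop :=
  dist (T^[a] x) (T^[b] z) < δ

theorem maxFit_eq_sSup (δ : ℝ) (n : ℕ) (x z : X) :
    maxFit T δ n x z = sSup (matchSizes (orbitRel T δ x z) n) := rfl

theorem le_maxFit_iff {δ : ℝ} {n k : ℕ} {x z : X} :
    k ≤ maxFit T δ n x z ↔ k ∈ matchSizes (orbitRel T δ x z) n := by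
  rw [maxFit_eq_sSup]
  exact le_sSup_matchSizes_iff

theorem maxFit_mem (δ : ℝ) (n : ℕ) (x z : X) :
    maxFit T δ n x z ∈ matchSizes (orbitRel T δ x z) n :=
  (le_maxFit_iff T).1 le_rfl

theorem maxFit_le (δ : ℝ) (n : ℕ) (x z : X) : maxFit T δ n x z ≤ n :=
  le_of_mem_matchSizes (maxFit_mem T δ n x z)

theorem maxFit_mono {δ δ' : ℝ} (h : δ ≤ δ') (n : ℕ) (x z : X) :
    maxFit T δ n x z ≤ maxFit T δ' n x z :=
  (le_maxFit_iff T).2 <|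
    matchSizes_mono (fun _ _ hab => lt_of_lt_of_le hab h) (maxFit_mem T δ n x z)

theorem maxFit_comm (δ : ℝ) (n : ℕ) (x z : X) : maxFit T δ n x z = maxFit T δ n z x := by
  have : orbitRel T δ z x = flip (orbitRel T δ x z) := by
    ext a b
    simp only [orbitRel, flip, dist_comm]
  rw [maxFit_eq_sSup, maxFit_eq_sSup, this, matchSizes_flip]

theorem maxFit_add_maxFit_le (δ₁ δ₂ : ℝ) (n : ℕ) (x p y : X) :
    maxFit T δ₁ n x p + maxFit T δ₂ n p y ≤ n + maxFit T (δ₁ + δ₂) n x y := by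
  obtain ⟨m, hm, hle⟩ := exists_mem_matchSizes_comp (maxFit_mem T δ₁ n x p)
    (maxFit_mem T δ₂ n p y)
  have hcomp : ∀ a b, Relation.Comp (orbitRel T δ₁ x p) (orbitRel T δ₂ p y) a b →
      orbitRel T (δ₁ + δ₂) x y a b :=
    fun _ _ ⟨c, hac, hcb⟩ => (dist_triangle _ _ _).trans_lt (add_lt_add hac hcb)
  exact hle.trans (Nat.add_le_add_left ((le_maxFit_iff T).2 (matchSizes_mono hcomp hm)) n)

theorem fbarN_nonneg (δ : ℝ) (n : ℕ) (x z : X) : 0 ≤ fbarN T δ n x z := by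
  rw [fbarN, sub_nonneg]
  exact div_le_one_of_le₀ (by exact_mod_cast maxFit_le T δ n x z) n.cast_nonneg

theorem fbarN_le_one (δ : ℝ) (n : ℕ) (x z : X) : fbarN T δ n x z ≤ 1 :=
  sub_le_self _ (by positivity)

theorem fbarN_anti {δ δ' : ℝ} (h : δ ≤ δ') (n : ℕ) (x z : X) :
    fbarN T δ' n x z ≤ fbarN T δ n x z := by
  unfold fbarN
  gcongr
  exact_mod_cast maxFit_mono T h n x z

theorem fbarN_comm (δ : ℝ) (n : ℕ) (x z : X) : fbarN T δ n x z = fbarN T δ n z x := by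
  rw [fbarN, fbarN, maxFit_comm]

theorem fbarN_add_le (δ₁ δ₂ : ℝ) (n : ℕ) (x p y : X) :
    fbarN T (δ₁ + δ₂) n x y ≤ fbarN T δ₁ n x p + fbarN T δ₂ n p y := by
  have hfit : ((maxFit T δ₁ n x p + maxFit T δ₂ n p y : ℕ) : ℝ) / n
      ≤ ((n + maxFit T (δ₁ + δ₂) n x y : ℕ) : ℝ) / n :=
    div_le_div_of_nonneg_right (by exact_mod_cast maxFit_add_maxFit_le T δ₁ δ₂ n x p y)
      n.cast_nonneg
  push_cast at hfit
  rw [add_div, add_div] at hfit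
  have := div_self_le_one (n : ℝ)
  unfold fbarN
  linarith

theorem fbar_le_one (δ : ℝ) (x z : X) : fbar T δ x z ≤ 1 :=
  limsup_le_of_le (isCoboundedUnder_le_of_le atTop fun n => fbarN_nonneg T δ n x z)
    (Eventually.of_forall fun n => fbarN_le_one T δ n x z)

theorem eventually_fbarN_lt_of_rhoFK_eq_zero {x z : X} (h : rhoFK T x z = 0) {ε : ℝ}
    (hε : 0 < ε) : ∀ᶠ n in atTop, fbarN T ε n x z < ε := by
  -- `sInf ∅ = 0` in `ℝ`, so the defining set of `rhoFK` has to be shown nonempty first.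
  have hne : {δ : ℝ | 0 < δ ∧ fbar T δ x z < δ}.Nonempty :=
    ⟨2, two_pos, (fbar_le_one T 2 x z).trans_lt one_lt_two⟩
  obtain ⟨δ, ⟨-, hδ⟩, hδε⟩ := exists_lt_of_csInf_lt hne (h.trans_lt hε)
  filter_upwards [eventually_lt_of_limsup_lt hδ
    (isBoundedUnder_of ⟨1, fun n => fbarN_le_one T δ n x z⟩)] with n hn
  exact (fbarN_anti T hδε.le n x z).trans_lt (hn.trans hδε)

theorem lowerSemicontinuous_maxFit (hT : Continuous T) (δ : ℝ) (n : ℕ) (p : X) :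
    LowerSemicontinuous fun x => maxFit T δ n x p := by
  refine lowerSemicontinuous_iff_isOpen_preimage.2 fun k => ?_
  simp only [preimage, mem_Ioi, ← Nat.succ_le_iff, le_maxFit_iff, matchSizes, orbitRel,
    mem_ofPred_eq, ofPred_exists, ofPred_and]
  refine isOpen_iUnion fun i => isOpen_iUnion fun j => ?_
  refine isOpen_const.inter <| isOpen_const.inter <| isOpen_const.inter <| isOpen_const.inter ?_
  rw [ofPred_forall]
  exact isOpen_iInter_of_finite fun s =>
    isOpen_lt ((hT.iterate _).dist continuous_const) continuous_const

theorem measurable_fbarN [MeasurableSpace X] [OpensMeasurableSpace X] (hT : Continuous T)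
    (δ : ℝ) (n : ℕ) (p : X) : Measurable fun x => fbarN T δ n x p :=
  measurable_const.sub <|
    (measurable_from_top.comp (lowerSemicontinuous_maxFit T hT δ n p).measurable).div_const _

end FKPaper

theorem uniform_match_on_rhoFK_null_set_general {X : Type*} [MetricSpace X]
    (T : X → X) (hT : Continuous T) [MeasurableSpace X] [BorelSpace X]
    (μ : Measure X) [IsProbabilityMeasure μ]
    (M : Set X) (hM : MeasurableSet M)
    (h0 : ∀ x ∈ M, ∀ y ∈ M, rhoFK T x y = 0) :
    ∀ τ > (0 : ℝ), ∃ N : ℕ, ∃ M₀ : Set X, MeasurableSet M₀ ∧ M₀ ⊆ M ∧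
      μ (M \ M₀) < ENNReal.ofReal τ ∧
      ∀ x ∈ M₀, ∀ y ∈ M₀, ∀ n ≥ N, fbarN T τ n x y ≤ τ := by
  intro τ hτ
  rcases M.eq_empty_or_nonempty with rfl | ⟨p, hp⟩
  · exact ⟨0, ∅, .empty, subset_rfl, by simpa using hτ, by simp⟩
  set A : ℕ → Set X := fun N => {x | ∀ n ≥ N, fbarN T (τ / 2) n x p ≤ τ / 2}
  have hA : ∀ N, MeasurableSet (A N) := fun N => by
    simp only [A, ofPred_forall]
    exact .iInter fun n => .iInter fun _ =>
      measurableSet_le (measurable_fbarN T hT _ n p) measurable_const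
  have hA_mono : Monotone A := fun N N' hNN' x hx n hn => hx n (hNN'.trans hn)
  have hMA : M ⊆ ⋃ N, A N := fun x hx => by
    obtain ⟨N, hN⟩ := eventually_atTop.1
      (eventually_fbarN_lt_of_rhoFK_eq_zero T (h0 x hx p hp) (half_pos hτ))
    exact mem_iUnion.2 ⟨N, fun n hn => (hN n hn).le⟩
  obtain ⟨N, hN⟩ := exists_measure_diff_lt_of_subset_iUnion μ hM hA hA_mono hMA
    (ENNReal.ofReal_pos.2 hτ)
  refine ⟨N, M ∩ A N, hM.inter (hA N), inter_subset_left, by rwa [sdiff_self_inter], ?_⟩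
  intro x hx y hy n hn
  calc fbarN T τ n x y = fbarN T (τ / 2 + τ / 2) n x y := by rw [add_halves]
    _ ≤ fbarN T (τ / 2) n x p + fbarN T (τ / 2) n p y := fbarN_add_le T _ _ n x p y
    _ ≤ τ / 2 + τ / 2 := add_le_add (hx.2 n hn) ((fbarN_comm T _ n p y).trans_le (hy.2 n hn))
    _ = τ := add_halves τ

/-- on a set where `ρ_FK` vanishes, the matching is uniform off a
small set (Lemma 1 of the paper). -/
theorem uniform_match_on_rhoFK_null_set {X : Type*} [MetricSpace X] [CompactSpace X] [Nonempty X]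
    (T : X → X) (hT : Continuous T) [MeasurableSpace X] [BorelSpace X]
    (μ : Measure X) [IsProbabilityMeasure μ] (hμ : Ergodic T μ)
    (M : Set X) (hM : MeasurableSet M)
    (h0 : ∀ x ∈ M, ∀ y ∈ M, rhoFK T x y = 0) :
    ∀ τ > (0 : ℝ), ∃ N : ℕ, ∃ M₀ : Set X, MeasurableSet M₀ ∧ M₀ ⊆ M ∧
      μ (M \ M₀) < ENNReal.ofReal τ ∧
      ∀ x ∈ M₀, ∀ y ∈ M₀, ∀ n ≥ N, fbarN T τ n x y ≤ τ :=
  uniform_match_on_rhoFK_null_set_general T hT μ M hM h0
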